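/- arXiv:1303.0817 — 3 statements merged into one kernel-verified Lean document; each statement's English description precedes it below -/
import Mathlib

section
/- One bit of cooperation can reduce the sum rate arbitrarily (Example 1). Fix a natural number b ≥ 1. Let X be uniformly distributed over {1,2,3,4}, let Y = (Y_1,Y_2,Y_3,Y_4) where the Y_j are i.i.d. uniform over {1,…,2^b} and independent of X, and let f(x,(y_1,y_2,y_3,y_4)) = (x, y_x). Then: (i) the rate tuple (R_0,R_X,R_Y) = (1, 2, 2b) belongs to the rate region; (ii) every tuple (0, R_X, R_Y) in the rate region satisfies R_X + R_Y ≥ 2 + 4b. Consequently one bit per symbol of cooperation decreases the minimum achievable sum rate R_X+R_Y by at least 2b bits. -/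
open scoped BigOperators Classical

section Preliminaries

variable {Ω : Type*} [Fintype Ω]

/-- The probability mass function of the random variable `X : Ω → α` under the
weight function `μ` on the finite sample space `Ω`. -/
noncomputable def pm {α : Type*} (μ : Ω → ℝ) (X : Ω → α) (a : α) : ℝ :=
  ∑ ω, if X ω = a then μ ω else 0

/-- `μ` is a probability mass function on the finite sample space `Ω`. -/
def IsPMF (μ : Ω → ℝ) : Prop := (∀ ω, 0 ≤ μ ω) ∧ ∑ ω, μ ω = 1

/-- Shannon entropy (in bits) of the random variable `X` under `μ`. -/
noncomputable def ent {α : Type*} [Fintype α] (μ : Ω → ℝ) (X : Ω → α) : ℝ :=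
  - ∑ a, pm μ X a * Real.logb 2 (pm μ X a)

/-- Conditional Shannon entropy H(X|Y) (in bits). -/
noncomputable def condEnt {α β : Type*} [Fintype α] [Fintype β] (μ : Ω → ℝ)
    (X : Ω → α) (Y : Ω → β) : ℝ :=
  ent μ (fun ω => (X ω, Y ω)) - ent μ Y

/-- Mutual information I(X;Y) (in bits). -/
noncomputable def mi {α β : Type*} [Fintype α] [Fintype β] (μ : Ω → ℝ)
    (X : Ω → α) (Y : Ω → β) : ℝ :=
  ent μ X + ent μ Y - ent μ (fun ω => (X ω, Y ω))

/-- Conditional mutual information I(X;Y|Z) (in bits). -/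
noncomputable def condMI {α β γ : Type*} [Fintype α] [Fintype β] [Fintype γ] (μ : Ω → ℝ)
    (X : Ω → α) (Y : Ω → β) (Z : Ω → γ) : ℝ :=
  condEnt μ X Z - condEnt μ X (fun ω => (Y ω, Z ω))

/-- `A` and `C` are conditionally independent given `B`
(the Markov chain A − B − C). -/
def CondIndepRV {α β γ : Type*} (μ : Ω → ℝ) (A : Ω → α) (B : Ω → β) (C : Ω → γ) : Prop :=
  ∀ a b c, pm μ (fun ω => (A ω, B ω, C ω)) (a, b, c) * pm μ B b
    = pm μ (fun ω => (A ω, B ω)) (a, b) * pm μ (fun ω => (B ω, C ω)) (b, c)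

/-- The conditional characteristic graph `G_{L|K}(f)` of `L` given `K`, with respect to
the source variable `S` and the function `f`: vertices `l₁ ≠ l₂` are adjacent iff there
are `k, s₁, s₂` with `p(l₁,k,s₁) ⬝ p(l₂,k,s₂) > 0` and `f s₁ ≠ f s₂`. -/
def charGraph {α β σ γ : Type*} (μ : Ω → ℝ) (L : Ω → α) (K : Ω → β) (S : Ω → σ)
    (f : σ → γ) : SimpleGraph α where
  Adj l₁ l₂ := l₁ ≠ l₂ ∧ ∃ k s₁ s₂,
    0 < pm μ (fun ω => (L ω, K ω, S ω)) (l₁, k, s₁) ∧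
    0 < pm μ (fun ω => (L ω, K ω, S ω)) (l₂, k, s₂) ∧ f s₁ ≠ f s₂
  symm := by
    constructor
    rintro l₁ l₂ ⟨h, k, s₁, s₂, h1, h2, hf⟩
    exact ⟨h.symm, k, s₂, s₁, h2, h1, hf.symm⟩
  loopless := by constructor; rintro l ⟨h, -⟩; exact h rfl

/-- A finite set of vertices is an independent set of the graph `G`. -/
def IsIndepSet {α : Type*} (G : SimpleGraph α) (s : Finset α) : Prop :=
  ∀ a ∈ s, ∀ b ∈ s, ¬ G.Adj a b

end Preliminaries

section Operational

variable {𝒳 𝒴 ℱ : Type*} [Fintype 𝒳] [Fintype 𝒴] [Fintype ℱ]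

/-- Number of messages available at block length `n` and rate `R`: `⌈2^{nR}⌉`. -/
noncomputable def msgCount (n : ℕ) (R : ℝ) : ℕ := ⌈(2 : ℝ) ^ ((n : ℝ) * R)⌉₊

/-- The i.i.d. product distribution of `n` copies of a source with pmf `p`. -/
noncomputable def prodPMF (p : 𝒳 × 𝒴 → ℝ) (n : ℕ) : (Fin n → 𝒳 × 𝒴) → ℝ :=
  fun ω => ∏ j, p (ω j)

/-- The error probability of a code `(φ0, φX, φY, ψ)` for computing `f` on `n`
i.i.d. copies of a source with pmf `p`. -/
noncomputable def errProb (p : 𝒳 × 𝒴 → ℝ) (f : 𝒳 × 𝒴 → ℱ) {n M0 MX MY : ℕ}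
    (φ0 : (Fin n → 𝒳) → Fin M0) (φX : (Fin n → 𝒳) → Fin MX)
    (φY : (Fin n → 𝒴) → Fin M0 → Fin MY)
    (ψ : Fin MX → Fin MY → Fin n → ℱ) : ℝ :=
  ∑ xy : Fin n → 𝒳 × 𝒴,
    if ψ (φX fun i => (xy i).1) (φY (fun i => (xy i).2) (φ0 fun i => (xy i).1))
        = fun i => f (xy i)
    then 0 else prodPMF p n xy

/-- A rate tuple `(R0, RX, RY)` is achievable for computing `f` at the receiver. -/
def Achievable (p : 𝒳 × 𝒴 → ℝ) (f : 𝒳 × 𝒴 → ℱ) (R0 RX RY : ℝ) : Prop :=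
  0 ≤ R0 ∧ 0 ≤ RX ∧ 0 ≤ RY ∧
  ∀ ε > (0 : ℝ), ∃ N : ℕ, ∀ n ≥ N,
    ∃ (φ0 : (Fin n → 𝒳) → Fin (msgCount n R0))
      (φX : (Fin n → 𝒳) → Fin (msgCount n RX))
      (φY : (Fin n → 𝒴) → Fin (msgCount n R0) → Fin (msgCount n RY))
      (ψ : Fin (msgCount n RX) → Fin (msgCount n RY) → Fin n → ℱ),
      errProb p f φ0 φX φY ψ ≤ ε

/-- The rate region: the closure of the set of achievable rate tuples. -/
noncomputable def rateRegion (p : 𝒳 × 𝒴 → ℝ) (f : 𝒳 × 𝒴 → ℱ) : Set (ℝ × ℝ × ℝ) :=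
  closure {r : ℝ × ℝ × ℝ | Achievable p f r.1 r.2.1 r.2.2}

end Operational

/-!
Achievability: the cooperation bit is the high bit of `x_i`, so `Y` only has to send the two
values `y_i(j)` with `j` in the half of `{1,2,3,4}` containing `x_i` (`2b` bits), while `X` sends
`x_i` (2 bits).

Converse: take a code with error at most `1/4000`. For most `y`, the pair `(φ0 x, φX x)` determines
`x` for most `x`, so `4^n ≲ M0 MX`. Moreover, for most `y` some cooperation class
`C = φ0⁻¹(m)` is large (`|C| ≥ 4^n / 2M0`) and decoded correctly for 99% of its members. A pair
`(i, j)` is rare in `C` if fewer than `|C|/48` of its members have `x_i = j`; for every other pair,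
`y_i(j)` is recovered by majority vote from `φY(y, m)`. A weighting argument shows that a large
class has only `O(log M0)` rare pairs, so `y` is determined by `m`, `φY(y, m)` and its values on
rare pairs, whence `2^{4bn} ≲ M0 MY 2^{8b log M0}`. Together, every achievable tuple satisfies
`2 + 4b ≤ RX + RY + (2 + 8b) R0`, a closed condition, hence so does the whole rate region.
-/

open Finset

section Counting

variable {α : Type*}

theorem mul_card_le_mul_card_filter_le (s : Finset α) (f : α → ℕ) (k t : ℕ)
    (hf : (k + 1) * ∑ x ∈ s, f x ≤ t * #s) :
    k * #s ≤ (k + 1) * #(s.filter fun x => f x ≤ t) := by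
  have hmarkov : #(s.filter fun x => ¬ f x ≤ t) * (t + 1) ≤ ∑ x ∈ s, f x := by
    refine (card_nsmul_le_sum _ f (t + 1) fun x hx => ?_).trans
      (sum_le_sum_of_subset (filter_subset _ s))
    exact Nat.succ_le_of_lt (not_le.1 (mem_filter.1 hx).2)
  have hsplit := card_filter_add_card_filter_not (s := s) fun x => f x ≤ t
  set G := #(s.filter fun x => f x ≤ t)
  set B := #(s.filter fun x => ¬ f x ≤ t)
  have hB : k * B * (t + 1) ≤ G * (t + 1) := by
    have := (Nat.mul_le_mul_left (k + 1) hmarkov).trans hf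
    rw [← hsplit] at this
    nlinarith
  nlinarith [Nat.le_of_mul_le_mul_right hB t.succ_pos]

theorem exists_large_and_sparse {γ : Type*} [Fintype γ] (a f : γ → ℕ)
    (ha : 0 < ∑ c, a c) (hf : 1000 * ∑ c, f c ≤ ∑ c, a c) :
    ∃ c, ∑ c, a c ≤ 2 * Fintype.card γ * a c ∧ 100 * f c ≤ a c := by
  by_contra! h
  set S := ∑ c, a c
  set K := Fintype.card γ
  have hK : 0 < K := by
    obtain ⟨c, -, -⟩ := exists_ne_zero_of_sum_ne_zero ha.ne'
    exact Fintype.card_pos_iff.2 ⟨c⟩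
  have hpoint : ∀ c, 2 * K * a c ≤ S + 200 * K * f c := by
    intro c
    by_cases hc : S ≤ 2 * K * a c
    · have := h c hc
      nlinarith
    · omega
  have hsum := sum_le_sum fun c (_ : c ∈ univ) => hpoint c
  rw [← mul_sum, sum_add_distrib, ← mul_sum, sum_const, card_univ, smul_eq_mul] at hsum
  change 2 * K * S ≤ K * S + 200 * K * ∑ c, f c at hsum
  nlinarith [Nat.mul_le_mul_left K hf, Nat.mul_pos hK ha]

end Counting

section RarePairs

variable {ι : Type*} [Fintype ι]

noncomputable def rarePairs (C : Finset (ι → Fin 4)) : Finset (ι × Fin 4) :=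
  {p | 48 * #(C.filter fun x => x p.1 = p.2) < #C}

noncomputable def rareHits (C : Finset (ι → Fin 4)) (x : ι → Fin 4) : ℕ :=
  #{i | (i, x i) ∈ rarePairs C}

theorem rareHits_eq_card_filter (C : Finset (ι → Fin 4)) (x : ι → Fin 4) :
    rareHits C x = #((rarePairs C).filter fun p => x p.1 = p.2) :=
  card_nbij' (fun i => (i, x i)) Prod.fst (fun i hi => by simp_all) (fun p hp => by simp_all)
    (fun i _ => rfl) (fun p hp => by simp_all)

theorem sum_rareHits_le (C : Finset (ι → Fin 4)) :
    48 * ∑ x ∈ C, rareHits C x ≤ #(rarePairs C) * #C := by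
  simp_rw [rareHits_eq_card_filter]
  have hdouble := sum_card_bipartiteAbove_eq_sum_card_bipartiteBelow (s := C) (t := rarePairs C)
    (r := fun x p => x p.1 = p.2)
  simp only [bipartiteAbove, bipartiteBelow] at hdouble
  rw [hdouble, mul_sum]
  calc _ ≤ ∑ _p ∈ rarePairs C, #C := sum_le_sum fun p hp => (mem_filter.1 hp).2.le
    _ = _ := by rw [sum_const, smul_eq_mul]

theorem sum_half_pow_rareHits_le (C : Finset (ι → Fin 4)) :
    ∑ x : ι → Fin 4, (1 / 2 : ℝ) ^ rareHits C x ≤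
      4 ^ Fintype.card ι * (7 / 8) ^ #(rarePairs C) := by
  set w : ι → Fin 4 → ℝ := fun i j => if (i, j) ∈ rarePairs C then 1 / 2 else 1
  set m : ι → ℕ := fun i => #{j | (i, j) ∈ rarePairs C}
  have hprod : ∀ x : ι → Fin 4, (1 / 2 : ℝ) ^ rareHits C x = ∏ i, w i (x i) := by
    intro x
    simp [w, rareHits, prod_ite]
  have hrow : ∀ i, ∑ j, w i j ≤ 4 * (7 / 8) ^ m i := by
    intro i
    have hcard := card_filter_add_card_filter_not (s := (univ : Finset (Fin 4)))
      fun j => (i, j) ∈ rarePairs C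
    have hbern := one_add_mul_le_pow (a := (-1 / 8 : ℝ)) (by norm_num) (m i)
    rw [card_univ, Fintype.card_fin] at hcard
    have hnot : (#{j | (i, j) ∉ rarePairs C} : ℝ) = 4 - m i := by
      rw [eq_sub_iff_add_eq', ← Nat.cast_add, hcard, Nat.cast_ofNat]
    simp only [w, sum_ite, sum_const, nsmul_eq_mul, hnot]
    norm_num at hbern ⊢
    linarith
  have hm : ∑ i, m i = #(rarePairs C) := by
    simp only [m, card_filter]
    rw [rarePairs, card_filter, Fintype.sum_prod_type]
    simp
  calc ∑ x : ι → Fin 4, (1 / 2 : ℝ) ^ rareHits C x = ∏ i, ∑ j, w i j := by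
        simp_rw [hprod]; exact (Fintype.prod_sum w).symm
    _ ≤ ∏ i, 4 * (7 / 8 : ℝ) ^ m i :=
        prod_le_prod (fun i _ => sum_nonneg fun j _ => by positivity) fun i _ => hrow i
    _ = _ := by rw [prod_mul_distrib, prod_const, prod_pow_eq_pow_sum, hm, card_univ]

theorem seven_eighths_pow_mul_two_rpow_le_one (r : ℕ) :
    (7 / 8 : ℝ) ^ r * 2 ^ ((r : ℝ) / 6) ≤ 1 := by
  have hbase : (7 / 8 : ℝ) * 2 ^ ((1 : ℝ) / 6) ≤ 1 := by
    rw [← pow_le_one_iff_of_nonneg (by positivity) (by norm_num : (6 : ℕ) ≠ 0), mul_pow,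
      ← Real.rpow_natCast (2 ^ _), ← Real.rpow_mul (by norm_num)]
    norm_num
  calc (7 / 8 : ℝ) ^ r * 2 ^ ((r : ℝ) / 6) = ((7 / 8) * 2 ^ ((1 : ℝ) / 6)) ^ r := by
        rw [mul_pow, ← Real.rpow_natCast (2 ^ _), ← Real.rpow_mul (by norm_num)]
        ring_nf
    _ ≤ 1 := pow_le_one₀ (by positivity) hbase

theorem card_mul_two_rpow_card_rarePairs_le (C : Finset (ι → Fin 4)) :
    (#C : ℝ) * 2 ^ ((#(rarePairs C) : ℝ) / 8) ≤ 2 * 4 ^ Fintype.card ι := by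
  set r := #(rarePairs C)
  -- By Markov, half of `C` has at most `r / 24` rare hits, so weight `2 ^ (-r / 24)` or more,
  -- while the total weight of all `x` is at most `4^n (7/8)^r`.
  set S := C.filter fun x => 24 * rareHits C x ≤ r
  have hS : #C ≤ 2 * #S := by
    have := mul_card_le_mul_card_filter_le C (fun x => 24 * rareHits C x) 1 r (by
      rw [← mul_sum]; linarith [sum_rareHits_le C])
    simpa using this
  have hlow : ∀ x ∈ S, (2 : ℝ) ^ (-(r : ℝ) / 24) ≤ (1 / 2) ^ rareHits C x := by
    intro x hx
    have hx : (24 * rareHits C x : ℝ) ≤ r := by exact_mod_cast (mem_filter.1 hx).2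
    rw [one_div, inv_pow, ← Real.rpow_natCast, ← Real.rpow_neg (by norm_num)]
    exact Real.rpow_le_rpow_of_exponent_le (by norm_num) (by linarith)
  have hSsum : (#S : ℝ) * 2 ^ (-(r : ℝ) / 24) ≤ 4 ^ Fintype.card ι * (7 / 8) ^ r :=
    calc (#S : ℝ) * 2 ^ (-(r : ℝ) / 24) ≤ ∑ x ∈ S, (1 / 2 : ℝ) ^ rareHits C x := by
          simpa using card_nsmul_le_sum S _ _ hlow
      _ ≤ ∑ x, (1 / 2 : ℝ) ^ rareHits C x :=
          sum_le_sum_of_subset_of_nonneg (subset_univ S) fun _ _ _ => by positivity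
      _ ≤ _ := sum_half_pow_rareHits_le C
  calc (#C : ℝ) * 2 ^ ((r : ℝ) / 8) ≤ 2 * #S * 2 ^ ((r : ℝ) / 8) := by
        gcongr; exact_mod_cast hS
    _ = 2 * (#S * 2 ^ (-(r : ℝ) / 24)) * 2 ^ ((r : ℝ) / 6) := by
        have hsplit :
            (2 : ℝ) ^ ((r : ℝ) / 8) = 2 ^ (-(r : ℝ) / 24) * 2 ^ ((r : ℝ) / 6) := by
          rw [← Real.rpow_add (by norm_num)]
          ring_nf
        rw [hsplit]
        ring
    _ ≤ 2 * (4 ^ Fintype.card ι * (7 / 8) ^ r) * 2 ^ ((r : ℝ) / 6) := by gcongr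
    _ = 2 * 4 ^ Fintype.card ι * ((7 / 8) ^ r * 2 ^ ((r : ℝ) / 6)) := by ring
    _ ≤ 2 * 4 ^ Fintype.card ι := by
        grw [seven_eighths_pow_mul_two_rpow_le_one, mul_one]

theorem card_rarePairs_le (C : Finset (ι → Fin 4)) (k : ℕ)
    (hC : 2 * 4 ^ Fintype.card ι ≤ 2 ^ k * #C) : #(rarePairs C) ≤ 8 * k := by
  have hCpos : (0 : ℝ) < #C := by
    have : 0 < 2 ^ k * #C := lt_of_lt_of_le (by positivity) hC
    exact_mod_cast Nat.pos_of_mul_pos_left this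
  have hpow : (#C : ℝ) * 2 ^ ((#(rarePairs C) : ℝ) / 8) ≤ #C * 2 ^ (k : ℝ) := by
    rw [Real.rpow_natCast, mul_comm (#C : ℝ) (2 ^ k)]
    have hC' : (2 * 4 ^ Fintype.card ι : ℝ) ≤ 2 ^ k * #C := by exact_mod_cast hC
    exact (card_mul_two_rpow_card_rarePairs_le C).trans hC'
  have := (Real.rpow_le_rpow_left_iff (by norm_num : (1 : ℝ) < 2)).1
    (le_of_mul_le_mul_left hpow hCpos)
  rw [div_le_iff₀ (by norm_num)] at this
  exact_mod_cast (by linarith : (#(rarePairs C) : ℝ) ≤ 8 * k)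

end RarePairs

section Converse

variable {β : Type*} {n M0 MX MY : ℕ}
  (φ0 : (Fin n → Fin 4) → Fin M0) (φX : (Fin n → Fin 4) → Fin MX)
  (φY : (Fin n → Fin 4 → β) → Fin M0 → Fin MY)
  (ψ : Fin MX → Fin MY → Fin n → Fin 4 × β)

def Decodes (x : Fin n → Fin 4) (y : Fin n → Fin 4 → β) : Prop :=
  ψ (φX x) (φY y (φ0 x)) = fun i => (x i, y i (x i))

noncomputable def failures (y : Fin n → Fin 4 → β) : Finset (Fin n → Fin 4) :=
  {x | ¬ Decodes φ0 φX φY ψ x y}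

def IsGoodClass (y : Fin n → Fin 4 → β) (m : Fin M0) : Prop :=
  4 ^ n ≤ 2 * M0 * #{x | φ0 x = m} ∧
    100 * #((failures φ0 φX φY ψ y).filter fun x => φ0 x = m) ≤ #{x | φ0 x = m}

theorem card_decodes_le (y : Fin n → Fin 4 → β) :
    #{x | Decodes φ0 φX φY ψ x y} ≤ M0 * MX := by
  calc _ ≤ #(univ : Finset (Fin M0 × Fin MX)) :=
        card_le_card_of_injOn (fun x => (φ0 x, φX x)) (fun _ _ => mem_coe.2 (mem_univ _)) ?_
    _ = M0 * MX := by simp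
  intro x hx x' hx' h
  have hx : Decodes φ0 φX φY ψ x y := (mem_filter.1 hx).2
  have hx' : Decodes φ0 φX φY ψ x' y := (mem_filter.1 hx').2
  simp only [Decodes, Prod.mk.injEq] at hx hx' h
  rw [h.1, h.2] at hx
  funext i
  exact congrArg Prod.fst (congrFun (hx.symm.trans hx') i)

theorem injOn_isGoodClass (m : Fin M0) :
    Set.InjOn (fun y => (φY y m, fun p : rarePairs ({x | φ0 x = m} : Finset _) => y p.1.1 p.1.2))
      {y | IsGoodClass φ0 φX φY ψ y m} := by
  set C : Finset (Fin n → Fin 4) := {x | φ0 x = m}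
  intro y hy y' hy' h
  simp only [Prod.mk.injEq, funext_iff, Subtype.forall] at h
  obtain ⟨hmsg, hrare⟩ := h
  funext i j
  by_cases hij : (i, j) ∈ rarePairs C
  · exact hrare (i, j) hij
  -- More than half of the column is decoded correctly for `y`, and also for `y'`; a common
  -- member `x` of both halves yields `y i j` and `y' i j` as the same decoder output.
  set col := C.filter fun x => x i = j
  have hcol : #C ≤ 48 * #col := by simpa [rarePairs] using hij
  have hmajority : ∀ z, IsGoodClass φ0 φX φY ψ z m →
      #col < 2 * #(col.filter fun x => Decodes φ0 φX φY ψ x z) := by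
    rintro z ⟨hlarge, hsparse⟩
    change 4 ^ n ≤ 2 * M0 * #C at hlarge
    change _ ≤ #C at hsparse
    have hbad : #(col.filter fun x => ¬ Decodes φ0 φX φY ψ x z) ≤
        #((failures φ0 φX φY ψ z).filter fun x => φ0 x = m) := by
      refine card_le_card fun x hx => ?_
      simp only [col, C, failures, mem_filter, mem_univ, true_and] at hx ⊢
      exact ⟨hx.2, hx.1.1⟩
    have hsplit := card_filter_add_card_filter_not (s := col) fun x => Decodes φ0 φX φY ψ x z
    have : 0 < #C := Nat.pos_of_mul_pos_left (lt_of_lt_of_le (by positivity) hlarge)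
    omega
  obtain ⟨x, hx⟩ := inter_nonempty_of_card_lt_card_add_card
    (filter_subset (fun x => Decodes φ0 φX φY ψ x y) col)
    (filter_subset (fun x => Decodes φ0 φX φY ψ x y') col)
    (by have := hmajority y hy; have := hmajority y' hy'; omega)
  simp only [mem_inter, mem_filter, col, C, mem_univ, true_and] at hx
  obtain ⟨⟨⟨hxm, hxi⟩, hdec⟩, -, hdec'⟩ := hx
  have e := congrFun hdec i
  have e' := congrFun hdec' i
  simp only [hxm, hxi, hmsg] at e e'
  exact congrArg Prod.snd (e.symm.trans e')

theorem card_isGoodClass_le [Fintype β] [Nonempty β] (m : Fin M0) (k : ℕ)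
    (hk : 4 * M0 ≤ 2 ^ k) :
    #{y | IsGoodClass φ0 φX φY ψ y m} ≤ MY * Fintype.card β ^ (8 * k) := by
  set C : Finset (Fin n → Fin 4) := {x | φ0 x = m}
  obtain hempty | ⟨y, hy⟩ :=
    ({y | IsGoodClass φ0 φX φY ψ y m} : Finset _).eq_empty_or_nonempty
  · simp [hempty]
  have hlarge : 4 ^ n ≤ 2 * M0 * #C := (mem_filter.1 hy).2.1
  have hrare : #(rarePairs C) ≤ 8 * k := card_rarePairs_le C k (by
    rw [Fintype.card_fin]
    nlinarith [Nat.mul_le_mul_right #C hk])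
  calc _ ≤ #(univ : Finset (Fin MY × (rarePairs C → β))) :=
        card_le_card_of_injOn _ (fun _ _ => mem_coe.2 (mem_univ _))
          (fun y hy y' hy' => injOn_isGoodClass φ0 φX φY ψ m (mem_filter.1 hy).2
            (mem_filter.1 hy').2)
    _ = MY * Fintype.card β ^ #(rarePairs C) := by simp
    _ ≤ MY * Fintype.card β ^ (8 * k) := by gcongr; exact Fintype.card_pos

theorem exists_isGoodClass (y : Fin n → Fin 4 → β)
    (hy : 1000 * #(failures φ0 φX φY ψ y) ≤ 4 ^ n) :
    ∃ m, IsGoodClass φ0 φX φY ψ y m := by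
  have hfibers : ∑ m : Fin M0, #{x | φ0 x = m} = 4 ^ n := by
    rw [← card_eq_sum_card_fiberwise fun x _ => mem_univ (φ0 x)]
    simp
  have hfailures : ∑ m : Fin M0, #((failures φ0 φX φY ψ y).filter fun x => φ0 x = m) =
      #(failures φ0 φX φY ψ y) :=
    (card_eq_sum_card_fiberwise fun x _ => mem_univ (φ0 x)).symm
  simpa [IsGoodClass, hfibers] using exists_large_and_sparse (fun m => #{x | φ0 x = m})
    (fun m => #((failures φ0 φX φY ψ y).filter fun x => φ0 x = m))
    (by rw [hfibers]; positivity) (by rwa [hfibers, hfailures])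

theorem three_mul_card_pow_le_card_few_failures [Fintype β]
    (hfail : 4000 * ∑ y, #(failures φ0 φX φY ψ y) ≤ 4 ^ n * Fintype.card β ^ (4 * n)) :
    3 * Fintype.card β ^ (4 * n) ≤ 4 * #{y | 1000 * #(failures φ0 φX φY ψ y) ≤ 4 ^ n} := by
  have hcard : #(univ : Finset (Fin n → Fin 4 → β)) = Fintype.card β ^ (4 * n) := by
    simp [pow_mul, pow_right_comm]
  rw [← hcard]
  refine mul_card_le_mul_card_filter_le _ (fun y => 1000 * #(failures φ0 φX φY ψ y)) 3 (4 ^ n)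
    ?_
  rw [hcard, ← mul_sum]
  linarith

theorem four_pow_le_of_sum_failures_le [Fintype β] [Nonempty β]
    (hfail : 4000 * ∑ y, #(failures φ0 φX φY ψ y) ≤ 4 ^ n * Fintype.card β ^ (4 * n)) :
    4 ^ n ≤ 2 * (M0 * MX) := by
  obtain ⟨y, hy⟩ :
      ({y | 1000 * #(failures φ0 φX φY ψ y) ≤ 4 ^ n} : Finset _).Nonempty := by
    have := three_mul_card_pow_le_card_few_failures φ0 φX φY ψ hfail
    have : 0 < Fintype.card β ^ (4 * n) := by positivity
    exact card_pos.1 (by omega)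
  have hy : 1000 * #(failures φ0 φX φY ψ y) ≤ 4 ^ n := (mem_filter.1 hy).2
  have hsplit := card_filter_add_card_filter_not (s := univ) fun x => Decodes φ0 φX φY ψ x y
  rw [card_univ, Fintype.card_fun, Fintype.card_fin, Fintype.card_fin] at hsplit
  have := card_decodes_le φ0 φX φY ψ y
  unfold failures at hy
  omega

theorem card_pow_le_of_sum_failures_le [Fintype β] [Nonempty β] (k : ℕ)
    (hk : 4 * M0 ≤ 2 ^ k)
    (hfail : 4000 * ∑ y, #(failures φ0 φX φY ψ y) ≤ 4 ^ n * Fintype.card β ^ (4 * n)) :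
    3 * Fintype.card β ^ (4 * n) ≤ 4 * (M0 * (MY * Fintype.card β ^ (8 * k))) := by
  refine (three_mul_card_pow_le_card_few_failures φ0 φX φY ψ hfail).trans
    (Nat.mul_le_mul_left 4 ?_)
  calc _ ≤ #(univ.biUnion fun m => ({y | IsGoodClass φ0 φX φY ψ y m} : Finset _)) := by
        refine card_le_card fun y hy => ?_
        obtain ⟨m, hm⟩ := exists_isGoodClass φ0 φX φY ψ y (mem_filter.1 hy).2
        simp only [mem_biUnion, mem_univ, true_and, mem_filter]
        exact ⟨m, hm⟩
    _ ≤ ∑ m : Fin M0, MY * Fintype.card β ^ (8 * k) :=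
        card_biUnion_le.trans (sum_le_sum fun m _ => card_isGoodClass_le φ0 φX φY ψ m k hk)
    _ = M0 * (MY * Fintype.card β ^ (8 * k)) := by simp

end Converse

theorem errProb_const_eq_sum_failures {β : Type*} [Fintype β] {n M0 MX MY : ℕ} (c : ℝ)
    (φ0 : (Fin n → Fin 4) → Fin M0) (φX : (Fin n → Fin 4) → Fin MX)
    (φY : (Fin n → Fin 4 → β) → Fin M0 → Fin MY)
    (ψ : Fin MX → Fin MY → Fin n → Fin 4 × β) :
    errProb (fun _ : Fin 4 × (Fin 4 → β) => c) (fun xy => (xy.1, xy.2 xy.1)) φ0 φX φY ψ =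
      (∑ y, #(failures φ0 φX φY ψ y)) * c ^ n := by
  unfold errProb prodPMF
  rw [← (Equiv.arrowProdEquivProdArrow _ _ _).symm.sum_comp, Fintype.sum_prod_type_right,
    Nat.cast_sum, sum_mul]
  refine sum_congr rfl fun y _ => ?_
  simp only [Equiv.arrowProdEquivProdArrow, Equiv.coe_fn_symm_mk, prod_const, card_univ,
    Fintype.card_fin, sum_ite, sum_const_zero, zero_add, sum_const, nsmul_eq_mul]
  unfold failures Decodes
  congr

theorem msgCount_le_two_pow_ceil (n : ℕ) (R : ℝ) : msgCount n R ≤ 2 ^ ⌈n * R⌉₊ := by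
  refine Nat.ceil_le.2 ?_
  push_cast
  rw [← Real.rpow_natCast]
  exact Real.rpow_le_rpow_of_exponent_le one_le_two (Nat.le_ceil _)

theorem msgCount_natCast (n k : ℕ) : msgCount n k = 2 ^ (n * k) := by
  rw [msgCount, ← Nat.cast_mul, Real.rpow_natCast]
  exact_mod_cast Nat.ceil_natCast _

noncomputable abbrev uniformSource (b : ℕ) : Fin 4 × (Fin 4 → Fin (2 ^ b)) → ℝ :=
  fun _ => ((4 : ℝ) * ((2 : ℝ) ^ b) ^ (4 : ℕ))⁻¹

abbrev selectValue (b : ℕ) (xy : Fin 4 × (Fin 4 → Fin (2 ^ b))) : Fin 4 × Fin (2 ^ b) :=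
  (xy.1, xy.2 xy.1)

theorem achievable_one_two_two_mul (b : ℕ) :
    Achievable (uniformSource b) (selectValue b) 1 2 (2 * b) := by
  refine ⟨zero_le_one, zero_le_two, by positivity, fun ε hε => ⟨0, fun n _ => ?_⟩⟩
  -- `σ.symm v = (high bit, low bit)`; the high bit is the cooperation message.
  let σ : Fin 2 × Fin 2 ≃ Fin 4 := finProdFinEquiv
  let e0 : (Fin n → Fin 2) ≃ Fin (msgCount n 1) := Fintype.equivFinOfCardEq (by
    simpa using (msgCount_natCast n 1).symm)
  let eX : (Fin n → Fin 4) ≃ Fin (msgCount n 2) := Fintype.equivFinOfCardEq (by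
    rw [Fintype.card_fun, Fintype.card_fin, Fintype.card_fin, show 4 = 2 ^ 2 from rfl, ← pow_mul,
      mul_comm]
    exact_mod_cast (msgCount_natCast n 2).symm)
  let eY : (Fin n → Fin 2 → Fin (2 ^ b)) ≃ Fin (msgCount n (2 * b)) :=
    Fintype.equivFinOfCardEq (by
      simpa [← pow_mul, mul_comm, mul_left_comm] using (msgCount_natCast n (2 * b)).symm)
  refine ⟨fun x => e0 fun i => (σ.symm (x i)).1, eX,
    fun y m => eY fun i t => y i (σ (e0.symm m i, t)),
    fun mx my i => (eX.symm mx i, eY.symm my i (σ.symm (eX.symm mx i)).2),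
    le_of_eq_of_le ?_ hε.le⟩
  refine sum_eq_zero fun xy _ => if_pos ?_
  funext i
  simp

theorem le_of_forall_ge_mul_le_mul_add {a b C : ℝ} {N : ℕ}
    (h : ∀ n ≥ N, a * n ≤ b * n + C) : a ≤ b := by
  by_contra! hba
  obtain ⟨n, hn⟩ := exists_nat_gt (max (N : ℝ) (C / (a - b)))
  have hN : N ≤ n := by exact_mod_cast (le_max_left _ _).trans hn.le
  have hC : C < (a - b) * n := by
    rw [← div_lt_iff₀' (sub_pos.2 hba)]
    exact (le_max_right _ _).trans_lt hn
  nlinarith [h n hN]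

theorem sum_failures_le_of_errProb_le {b n M0 MX MY : ℕ}
    (φ0 : (Fin n → Fin 4) → Fin M0) (φX : (Fin n → Fin 4) → Fin MX)
    (φY : (Fin n → Fin 4 → Fin (2 ^ b)) → Fin M0 → Fin MY)
    (ψ : Fin MX → Fin MY → Fin n → Fin 4 × Fin (2 ^ b))
    (herr : errProb (uniformSource b) (selectValue b) φ0 φX φY ψ ≤ 1 / 4000) :
    4000 * ∑ y, #(failures φ0 φX φY ψ y) ≤
      4 ^ n * Fintype.card (Fin (2 ^ b)) ^ (4 * n) := by
  rw [errProb_const_eq_sum_failures, inv_pow, ← div_eq_mul_inv,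
    div_le_iff₀ (by positivity)] at herr
  rw [Fintype.card_fin, pow_mul, ← mul_pow]
  exact_mod_cast (by linarith :
    (4000 * ∑ y, #(failures φ0 φX φY ψ y) : ℝ) ≤ (4 * (2 ^ b) ^ 4) ^ n)

theorem Achievable.two_add_four_mul_le {b : ℕ} {R0 RX RY : ℝ}
    (h : Achievable (uniformSource b) (selectValue b) R0 RX RY) :
    2 + 4 * (b : ℝ) ≤ RX + RY + (2 + 8 * b) * R0 := by
  obtain ⟨hR0, hRX, hRY, hcodes⟩ := h
  obtain ⟨N, hN⟩ := hcodes (1 / 4000) (by norm_num)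
  refine le_of_forall_ge_mul_le_mul_add (C := 7 + 24 * b) (N := N) fun n hn => ?_
  obtain ⟨φ0, φX, φY, ψ, herr⟩ := hN n hn
  have hfail := sum_failures_le_of_errProb_le φ0 φX φY ψ herr
  have hM0 := msgCount_le_two_pow_ceil n R0
  have hMX := msgCount_le_two_pow_ceil n RX
  have hMY := msgCount_le_two_pow_ceil n RY
  set c0 := ⌈n * R0⌉₊
  set cX := ⌈n * RX⌉₊
  set cY := ⌈n * RY⌉₊
  have hA : 2 * n ≤ 1 + c0 + cX := by
    refine (Nat.pow_le_pow_iff_right one_lt_two).1 ?_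
    calc 2 ^ (2 * n) = 4 ^ n := by rw [pow_mul]; rfl
      _ ≤ 2 * (msgCount n R0 * msgCount n RX) := four_pow_le_of_sum_failures_le φ0 φX φY ψ hfail
      _ ≤ 2 * (2 ^ c0 * 2 ^ cX) := by gcongr
      _ = 2 ^ (1 + c0 + cX) := by rw [pow_add, pow_add, pow_one, mul_assoc]
  have hB : b * (4 * n) ≤ 2 + c0 + cY + b * (8 * (c0 + 2)) := by
    have hcard := card_pow_le_of_sum_failures_le φ0 φX φY ψ (c0 + 2)
      (by rw [pow_add]; omega) hfail
    rw [Fintype.card_fin, ← pow_mul, ← pow_mul] at hcard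
    refine (Nat.pow_le_pow_iff_right one_lt_two).1 ?_
    calc 2 ^ (b * (4 * n)) ≤ 3 * 2 ^ (b * (4 * n)) := Nat.le_mul_of_pos_left _ three_pos
      _ ≤ 4 * (msgCount n R0 * (msgCount n RY * 2 ^ (b * (8 * (c0 + 2))))) := hcard
      _ ≤ 2 ^ 2 * (2 ^ c0 * (2 ^ cY * 2 ^ (b * (8 * (c0 + 2))))) := by gcongr; norm_num
      _ = 2 ^ (2 + c0 + cY + b * (8 * (c0 + 2))) := by simp only [pow_add, mul_assoc]
  have hc0 : (c0 : ℝ) < n * R0 + 1 := Nat.ceil_lt_add_one (by positivity)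
  have hcX : (cX : ℝ) < n * RX + 1 := Nat.ceil_lt_add_one (by positivity)
  have hcY : (cY : ℝ) < n * RY + 1 := Nat.ceil_lt_add_one (by positivity)
  have hA' : (2 * n : ℝ) ≤ 1 + c0 + cX := by exact_mod_cast hA
  have hB' : (b * (4 * n) : ℝ) ≤ 2 + c0 + cY + b * (8 * (c0 + 2)) := by exact_mod_cast hB
  have hb : (0 : ℝ) ≤ b := b.cast_nonneg
  nlinarith

theorem one_bit_cooperation_helps_general (b : ℕ) :
    (((1 : ℝ), (2 : ℝ), (2 * (b : ℝ))) ∈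
      rateRegion (fun _ : Fin 4 × (Fin 4 → Fin (2 ^ b)) => ((4 : ℝ) * ((2 : ℝ) ^ b) ^ (4 : ℕ))⁻¹)
        (fun xy => (xy.1, xy.2 xy.1))) ∧
    (∀ RX RY : ℝ,
      ((0 : ℝ), RX, RY) ∈
        rateRegion (fun _ : Fin 4 × (Fin 4 → Fin (2 ^ b)) => ((4 : ℝ) * ((2 : ℝ) ^ b) ^ (4 : ℕ))⁻¹)
          (fun xy => (xy.1, xy.2 xy.1)) →
      2 + 4 * (b : ℝ) ≤ RX + RY) := by
  refine ⟨subset_closure (achievable_one_two_two_mul b), fun RX RY hmem => ?_⟩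
  have hclosed :
      IsClosed {r : ℝ × ℝ × ℝ | 2 + 4 * (b : ℝ) ≤ r.2.1 + r.2.2 + (2 + 8 * b) * r.1} :=
    isClosed_le continuous_const (by fun_prop)
  have h : 2 + 4 * (b : ℝ) ≤ RX + RY + (2 + 8 * b) * 0 :=
    closure_minimal (fun r hr => Achievable.two_add_four_mul_le hr) hclosed hmem
  simpa using h

/-- **Example 1 (one bit of cooperation can help arbitrarily).** Let `X` be uniform on
`{1,…,4}`, `Y = (Y_1,…,Y_4)` with the `Y_j` i.i.d. uniform on `{1,…,2^b}` and
independent of `X`, and `f(x,y) = (x, y_x)`. Then (i) the rate tuple `(1, 2, 2b)` is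
in the rate region, and (ii) every tuple `(0, RX, RY)` in the rate region satisfies
`RX + RY ≥ 2 + 4b`. -/
theorem one_bit_cooperation_helps (b : ℕ) (hb : 1 ≤ b) :
    (((1 : ℝ), (2 : ℝ), (2 * (b : ℝ))) ∈
      rateRegion (fun _ : Fin 4 × (Fin 4 → Fin (2 ^ b)) => ((4 : ℝ) * ((2 : ℝ) ^ b) ^ (4 : ℕ))⁻¹)
        (fun xy => (xy.1, xy.2 xy.1))) ∧
    (∀ RX RY : ℝ,
      ((0 : ℝ), RX, RY) ∈
        rateRegion (fun _ : Fin 4 × (Fin 4 → Fin (2 ^ b)) => ((4 : ℝ) * ((2 : ℝ) ^ b) ^ (4 : ℕ))⁻¹)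
          (fun xy => (xy.1, xy.2 xy.1)) →
      2 + 4 * (b : ℝ) ≤ RX + RY) :=
  one_bit_cooperation_helps_general b
end

section
/- Conditional independence of the past encoder output (step in the converse of Theorem 2). Let ((X_j,Y_j))_{j=1}^n be i.i.d. copies of a pair (X,Y) of finite-valued random variables. Let φ_0 and φ_X be arbitrary functions on 𝒳^n and φ_Y an arbitrary function on 𝒞_0 × 𝒴^n, and set C_0 = φ_0(X_1,…,X_n), C_X = φ_X(X_1,…,X_n), C_Y = φ_Y(C_0, Y_1,…,Y_n). Then for every i ∈ {1,…,n} and every function f : 𝒳×𝒴 → ℱ, the random variables f(X_i,Y_i) and C_X are conditionally independent given (C_0, X_i, X_{i+1},…,X_n, Y_1,…,Y_{i−1}, C_Y). -/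
/-!
Pair the sample `ω₁` with an independent copy `ω₂`. When the two have the same conditioning
value `B`, they share `X_{≥ i}` and `Y_{< i}`, so exchanging their coordinates `j < i` amounts to
exchanging their `X`-sequences: this keeps both `B`-values (as `C_0 = φ_0(X^n)` agrees too) and
`f(X_i, Y_i)` of the first copy, exchanges the two values of `C_X`, and preserves the product
weight because whole i.i.d. coordinates are exchanged. Hence it maps the event
`{A = a, B = b} × {B = b, C = c}` onto `{A = a, B = b, C = c} × {B = b}`, and the masses of these
events are the two sides of the conditional independence identity.
-/

open scoped BigOperators Classical

theorem condIndepRV_of_involutive {Ω α β γ : Type*} [Fintype Ω] (μ : Ω → ℝ)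
    (A : Ω → α) (B : Ω → β) (C : Ω → γ)
    (σ : Ω × Ω → Ω × Ω) (hσ : Function.Involutive σ)
    (hμ : ∀ q, μ (σ q).1 * μ (σ q).2 = μ q.1 * μ q.2)
    (hσB : ∀ q, B q.1 = B q.2 →
      A (σ q).1 = A q.1 ∧ B (σ q).1 = B q.1 ∧ B (σ q).2 = B q.2 ∧ C (σ q).1 = C q.2) :
    CondIndepRV μ A B C := by
  intro a b c
  simp only [pm, Prod.mk.injEq]
  rw [Finset.sum_mul_sum, Finset.sum_mul_sum, ← Fintype.sum_prod_type', ← Fintype.sum_prod_type']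
  refine Fintype.sum_bijective σ hσ.bijective _ _ fun q => ?_
  rw [ite_zero_mul_ite_zero, ite_zero_mul_ite_zero, hμ]
  refine if_congr ?_ rfl rfl
  constructor
  · rintro ⟨⟨rfl, hb, rfl⟩, hb'⟩
    obtain ⟨hA, hB₁, hB₂, -⟩ := hσB q (hb.trans hb'.symm)
    obtain ⟨-, -, -, hC⟩ := hσB (σ q) (by rw [hB₁, hB₂, hb, hb'])
    rw [hσ q] at hC
    exact ⟨⟨hA, hB₁.trans hb⟩, hB₂.trans hb', hC.symm⟩
  · rintro ⟨⟨rfl, hb⟩, hb', rfl⟩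
    obtain ⟨hA, hB₁, hB₂, hC⟩ := hσB (σ q) (hb.trans hb'.symm)
    rw [hσ q] at hA hB₁ hB₂ hC
    exact ⟨⟨hA, hB₁.trans hb, hC⟩, hB₂.trans hb'⟩

section SwapOn

variable {ι α : Type*}

def swapOn (s : Set ι) [DecidablePred (· ∈ s)] (q : (ι → α) × (ι → α)) : (ι → α) × (ι → α) :=
  (s.piecewise q.2 q.1, s.piecewise q.1 q.2)

theorem swapOn_involutive (s : Set ι) [DecidablePred (· ∈ s)] :
    Function.Involutive (swapOn (α := α) s) := by
  rintro ⟨q₁, q₂⟩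
  ext j <;> by_cases hj : j ∈ s <;> simp [swapOn, hj]

theorem prod_swapOn {M : Type*} [CommMonoid M] [Fintype ι] (g : α → M) (s : Set ι)
    [DecidablePred (· ∈ s)] (q : (ι → α) × (ι → α)) :
    (∏ j, g ((swapOn s q).1 j)) * ∏ j, g ((swapOn s q).2 j)
      = (∏ j, g (q.1 j)) * ∏ j, g (q.2 j) := by
  rw [← Finset.prod_mul_distrib, ← Finset.prod_mul_distrib]
  refine Finset.prod_congr rfl fun j _ => ?_
  by_cases hj : j ∈ s <;> simp [swapOn, hj, mul_comm]

variable {β : Type*} {s : Set ι} [DecidablePred (· ∈ s)] {q : (ι → α × β) × (ι → α × β)}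

theorem swapOn_fst_eq (hx : ∀ j ∉ s, (q.1 j).1 = (q.2 j).1)
    (hy : ∀ j ∈ s, (q.1 j).2 = (q.2 j).2) :
    (swapOn s q).1 = fun j => ((q.2 j).1, (q.1 j).2) := by
  ext j <;> by_cases hj : j ∈ s <;> simp [swapOn, hj, hx, hy]

theorem swapOn_snd_eq (hx : ∀ j ∉ s, (q.1 j).1 = (q.2 j).1)
    (hy : ∀ j ∈ s, (q.1 j).2 = (q.2 j).2) :
    (swapOn s q).2 = fun j => ((q.1 j).1, (q.2 j).2) := by
  ext j <;> by_cases hj : j ∈ s <;> simp [swapOn, hj, hx, hy]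

end SwapOn

theorem past_encoder_output_cond_indep_general
    {𝒳 𝒴 ℱ 𝒞0 𝒞X 𝒞Y : Type*}
    [Fintype 𝒳] [Fintype 𝒴]
    (p : 𝒳 × 𝒴 → ℝ) (n : ℕ)
    (φ0 : (Fin n → 𝒳) → 𝒞0) (φX : (Fin n → 𝒳) → 𝒞X)
    (φY : 𝒞0 × (Fin n → 𝒴) → 𝒞Y)
    (f : 𝒳 × 𝒴 → ℱ) (i : Fin n) :
    CondIndepRV (prodPMF p n)
      (fun ω => f (ω i))
      (fun ω => (φ0 fun j => (ω j).1,
        fun j : {j : Fin n // i ≤ j} => (ω j.1).1,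
        fun j : {j : Fin n // j < i} => (ω j.1).2,
        φY (φ0 fun j => (ω j).1, fun j => (ω j).2)))
      (fun ω => φX fun j => (ω j).1) := by
  refine condIndepRV_of_involutive _ _ _ _ (swapOn {j | j < i}) (swapOn_involutive _)
    (fun q => prod_swapOn p _ q) ?_
  rintro ⟨ω₁, ω₂⟩ hB
  simp only [Prod.mk.injEq] at hB
  obtain ⟨h0, hx, hy, -⟩ := hB
  have hx' : ∀ j ∉ {j | j < i}, (ω₁ j).1 = (ω₂ j).1 := fun j hj =>
    congrFun hx ⟨j, not_lt.mp hj⟩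
  have hy' : ∀ j ∈ {j | j < i}, (ω₁ j).2 = (ω₂ j).2 := fun j hj => congrFun hy ⟨j, hj⟩
  rw [swapOn_fst_eq hx' hy', swapOn_snd_eq hx' hy']
  simp [h0, hx, ← hx' i (lt_irrefl i)]

/-- **Step in the converse of Theorem 2.** With `C_0 = φ_0(X^n)`, `C_X = φ_X(X^n)` and
`C_Y = φ_Y(C_0, Y^n)` computed from `n` i.i.d. copies of `(X,Y)`, the random variables
`f(X_i,Y_i)` and `C_X` are conditionally independent given
`(C_0, X_i, X_{i+1}, …, X_n, Y_1, …, Y_{i−1}, C_Y)`. -/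
theorem past_encoder_output_cond_indep
    {𝒳 𝒴 ℱ 𝒞0 𝒞X 𝒞Y : Type*}
    [Fintype 𝒳] [Fintype 𝒴] [Fintype ℱ] [Fintype 𝒞0] [Fintype 𝒞X] [Fintype 𝒞Y]
    (p : 𝒳 × 𝒴 → ℝ) (hp : IsPMF p) (n : ℕ)
    (φ0 : (Fin n → 𝒳) → 𝒞0) (φX : (Fin n → 𝒳) → 𝒞X)
    (φY : 𝒞0 × (Fin n → 𝒴) → 𝒞Y)
    (f : 𝒳 × 𝒴 → ℱ) (i : Fin n) :
    CondIndepRV (prodPMF p n)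
      (fun ω => f (ω i))
      (fun ω => (φ0 fun j => (ω j).1,
        fun j : {j : Fin n // i ≤ j} => (ω j.1).1,
        fun j : {j : Fin n // j < i} => (ω j.1).2,
        φY (φ0 fun j => (ω j).1, fun j => (ω j).2)))
      (fun ω => φX fun j => (ω j).1) :=
  past_encoder_output_cond_indep_general p n φ0 φX φY f i
end

section
/- Supports of W are independent sets of the conditional characteristic graph (final step in the converse of Theorem 2). Let X, U, Y, W be finite-valued random variables with joint pmf p and let f : 𝒳×𝒴 → ℱ. Assume the Markov chain X−(U,Y)−W holds (X and W conditionally independent given (U,Y)) and H(f(X,Y) | X, U, W) = 0. Then for all u, y_1, y_2, x, w: if p(u,y_1,w) > 0, p(u,y_2,w) > 0, p(x,u,y_1) > 0 and p(x,u,y_2) > 0, then f(x,y_1) = f(x,y_2). Equivalently, for every w with P(W=w)>0, the set {(u,y) : p(u,y,w) > 0} is an independent set of the conditional characteristic graph G_{U,Y|X,U}(f). -/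
open scoped BigOperators Classical

/-! The Markov chain turns `p(x,u,y) > 0` and `p(u,y,w) > 0` into `p(x,u,y,w) > 0`, since
`p(x,u,y,w) p(u,y) = p(x,u,y) p(u,y,w)`. So there are outcomes of positive mass at
`(x,u,y₁,w)` and at `(x,u,y₂,w)`, with the same value `(x,u,w)` of `(X,U,W)`. Zero conditional
entropy forces `p(a,b) = p(b)` whenever `p(a,b) > 0`, so `f(X,Y)` takes a single value on such a
fibre, and `f(x,y₁) = f(x,y₂)`. -/

section Support

variable {Ω : Type*} [Fintype Ω] {μ : Ω → ℝ}

theorem pm_nonneg {α : Type*} (hμ : ∀ ω, 0 ≤ μ ω) (Z : Ω → α) (z : α) : 0 ≤ pm μ Z z :=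
  Finset.sum_nonneg fun ω _ => by split_ifs <;> simp [hμ ω]

theorem pm_pos_iff {α : Type*} (hμ : ∀ ω, 0 ≤ μ ω) {Z : Ω → α} {z : α} :
    0 < pm μ Z z ↔ ∃ ω, Z ω = z ∧ 0 < μ ω := by
  rw [pm, ← Finset.sum_filter, Finset.sum_pos_iff_of_nonneg fun ω _ => hμ ω]
  simp

theorem pm_eq_sum_pm_prod {α β : Type*} [Fintype α] (μ : Ω → ℝ) (A : Ω → α) (B : Ω → β)
    (b : β) : pm μ B b = ∑ a, pm μ (fun ω => (A ω, B ω)) (a, b) := by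
  simp only [pm, Prod.mk.injEq, ite_and]
  rw [Finset.sum_comm]
  simp

theorem pm_prod_le {α β : Type*} [Fintype α] (hμ : ∀ ω, 0 ≤ μ ω) (A : Ω → α) (B : Ω → β)
    (a : α) (b : β) : pm μ (fun ω => (A ω, B ω)) (a, b) ≤ pm μ B b := by
  rw [pm_eq_sum_pm_prod μ A B b]
  exact Finset.single_le_sum (fun a' _ => pm_nonneg hμ _ (a', b)) (Finset.mem_univ a)

theorem CondIndepRV.pm_pos {α β γ : Type*} {A : Ω → α} {B : Ω → β} {C : Ω → γ}
    (h : CondIndepRV μ A B C) (hμ : ∀ ω, 0 ≤ μ ω) {a : α} {b : β} {c : γ}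
    (hab : 0 < pm μ (fun ω => (A ω, B ω)) (a, b))
    (hbc : 0 < pm μ (fun ω => (B ω, C ω)) (b, c)) :
    0 < pm μ (fun ω => (A ω, B ω, C ω)) (a, b, c) := by
  have hprod : 0 < pm μ (fun ω => (A ω, B ω, C ω)) (a, b, c) * pm μ B b := by
    rw [h a b c]
    exact mul_pos hab hbc
  exact pos_of_mul_pos_left hprod (pm_nonneg hμ B b)

end Support

section Entropy

variable {Ω α β : Type*} [Fintype Ω] [Fintype α] [Fintype β] {μ : Ω → ℝ}

theorem condEnt_eq_sum (μ : Ω → ℝ) (A : Ω → α) (B : Ω → β) :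
    condEnt μ A B = ∑ p : α × β, pm μ (fun ω => (A ω, B ω)) p *
      (Real.logb 2 (pm μ B p.2) - Real.logb 2 (pm μ (fun ω => (A ω, B ω)) p)) := by
  have hB : ∑ b, pm μ B b * Real.logb 2 (pm μ B b)
      = ∑ p : α × β, pm μ (fun ω => (A ω, B ω)) p * Real.logb 2 (pm μ B p.2) := by
    rw [Fintype.sum_prod_type_right]
    simp_rw [← Finset.sum_mul, ← pm_eq_sum_pm_prod]
  simp only [condEnt, ent, hB, mul_sub, Finset.sum_sub_distrib]
  ring

theorem pm_prod_eq_of_condEnt_eq_zero (hμ : ∀ ω, 0 ≤ μ ω) {A : Ω → α} {B : Ω → β}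
    (h : condEnt μ A B = 0) {a : α} {b : β} (hab : 0 < pm μ (fun ω => (A ω, B ω)) (a, b)) :
    pm μ (fun ω => (A ω, B ω)) (a, b) = pm μ B b := by
  set q := pm μ (fun ω => (A ω, B ω))
  have hterm : ∀ p : α × β, 0 ≤ q p * (Real.logb 2 (pm μ B p.2) - Real.logb 2 (q p)) := by
    intro p
    have hq : 0 ≤ q p := pm_nonneg hμ _ p
    rcases hq.eq_or_lt with hp | hp
    · rw [← hp, zero_mul]
    · have := Real.logb_le_logb_of_le one_lt_two hp (pm_prod_le hμ A B p.1 p.2)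
      exact mul_nonneg hp.le (sub_nonneg.2 this)
  have hzero : q (a, b) * (Real.logb 2 (pm μ B b) - Real.logb 2 (q (a, b))) = 0 :=
    (Finset.sum_eq_zero_iff_of_nonneg fun p _ => hterm p).1 (condEnt_eq_sum μ A B ▸ h) (a, b)
      (Finset.mem_univ _)
  have hlog : Real.logb 2 (q (a, b)) = Real.logb 2 (pm μ B b) :=
    (sub_eq_zero.1 ((mul_eq_zero.1 hzero).resolve_left hab.ne')).symm
  exact Real.logb_injOn_pos one_lt_two hab (hab.trans_le (pm_prod_le hμ A B a b)) hlog

theorem eq_of_condEnt_eq_zero (hμ : ∀ ω, 0 ≤ μ ω) {A : Ω → α} {B : Ω → β}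
    (h : condEnt μ A B = 0) {ω₁ ω₂ : Ω} (h₁ : 0 < μ ω₁) (h₂ : 0 < μ ω₂) (hB : B ω₁ = B ω₂) :
    A ω₁ = A ω₂ := by
  by_contra hne
  have hq₁ : 0 < pm μ (fun ω => (A ω, B ω)) (A ω₁, B ω₁) := (pm_pos_iff hμ).2 ⟨ω₁, rfl, h₁⟩
  have hq₂ : 0 < pm μ (fun ω => (A ω, B ω)) (A ω₂, B ω₁) :=
    (pm_pos_iff hμ).2 ⟨ω₂, by rw [hB], h₂⟩
  have hsum : pm μ (fun ω => (A ω, B ω)) (A ω₁, B ω₁) + pm μ (fun ω => (A ω, B ω)) (A ω₂, B ω₁)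
      ≤ pm μ B (B ω₁) := by
    rw [pm_eq_sum_pm_prod μ A B]
    exact Finset.add_le_sum (fun a _ => pm_nonneg hμ _ (a, B ω₁)) (Finset.mem_univ _)
      (Finset.mem_univ _) hne
  linarith [pm_prod_eq_of_condEnt_eq_zero hμ h hq₁, pm_prod_eq_of_condEnt_eq_zero hμ h hq₂]

end Entropy

theorem support_of_W_is_independent_set_general
    {Ω 𝒳 𝒰 𝒴 𝒲 ℱ : Type*}
    [Fintype Ω] [Fintype 𝒳] [Fintype 𝒰] [Fintype 𝒲] [Fintype ℱ]
    (μ : Ω → ℝ) (hμ : IsPMF μ)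
    (X : Ω → 𝒳) (U : Ω → 𝒰) (Y : Ω → 𝒴) (W : Ω → 𝒲) (f : 𝒳 × 𝒴 → ℱ)
    -- Markov chain X − (U,Y) − W
    (hMarkov : CondIndepRV μ X (fun ω => (U ω, Y ω)) W)
    -- H(f(X,Y) | X, U, W) = 0
    (hdet : condEnt μ (fun ω => f (X ω, Y ω)) (fun ω => (X ω, U ω, W ω)) = 0) :
    ∀ u y₁ y₂ x w,
      0 < pm μ (fun ω => (U ω, Y ω, W ω)) (u, y₁, w) →
      0 < pm μ (fun ω => (U ω, Y ω, W ω)) (u, y₂, w) →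
      0 < pm μ (fun ω => (X ω, U ω, Y ω)) (x, u, y₁) →
      0 < pm μ (fun ω => (X ω, U ω, Y ω)) (x, u, y₂) →
      f (x, y₁) = f (x, y₂) := by
  intro u y₁ y₂ x w hw₁ hw₂ hx₁ hx₂
  have joint_support : ∀ y, 0 < pm μ (fun ω => (U ω, Y ω, W ω)) (u, y, w) →
      0 < pm μ (fun ω => (X ω, U ω, Y ω)) (x, u, y) →
      ∃ ω, (X ω, (U ω, Y ω), W ω) = (x, (u, y), w) ∧ 0 < μ ω := fun y hw hx =>
    (pm_pos_iff hμ.1).1 <| hMarkov.pm_pos hμ.1 hx <| by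
      simpa only [pm, Prod.mk.injEq, and_assoc] using hw
  obtain ⟨ω₁, hω₁, hμ₁⟩ := joint_support y₁ hw₁ hx₁
  obtain ⟨ω₂, hω₂, hμ₂⟩ := joint_support y₂ hw₂ hx₂
  simp only [Prod.mk.injEq] at hω₁ hω₂
  have hf := eq_of_condEnt_eq_zero hμ.1 hdet hμ₁ hμ₂ (by simp only [hω₁, hω₂])
  simpa only [hω₁, hω₂] using hf

/-- **Final step in the converse of Theorem 2.** If `X − (U,Y) − W` is a Markov chain and
`H(f(X,Y) | X,U,W) = 0`, then whenever `p(u,y₁,w) > 0`, `p(u,y₂,w) > 0`, `p(x,u,y₁) > 0`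
and `p(x,u,y₂) > 0` one has `f(x,y₁) = f(x,y₂)`; i.e. the support of each value `w` of `W`
is an independent set of the conditional characteristic graph `G_{U,Y|X,U}(f)`. -/
theorem support_of_W_is_independent_set
    {Ω 𝒳 𝒰 𝒴 𝒲 ℱ : Type*}
    [Fintype Ω] [Fintype 𝒳] [Fintype 𝒰] [Fintype 𝒴] [Fintype 𝒲] [Fintype ℱ]
    (μ : Ω → ℝ) (hμ : IsPMF μ)
    (X : Ω → 𝒳) (U : Ω → 𝒰) (Y : Ω → 𝒴) (W : Ω → 𝒲) (f : 𝒳 × 𝒴 → ℱ)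
    -- Markov chain X − (U,Y) − W
    (hMarkov : CondIndepRV μ X (fun ω => (U ω, Y ω)) W)
    -- H(f(X,Y) | X, U, W) = 0
    (hdet : condEnt μ (fun ω => f (X ω, Y ω)) (fun ω => (X ω, U ω, W ω)) = 0) :
    ∀ u y₁ y₂ x w,
      0 < pm μ (fun ω => (U ω, Y ω, W ω)) (u, y₁, w) →
      0 < pm μ (fun ω => (U ω, Y ω, W ω)) (u, y₂, w) →
      0 < pm μ (fun ω => (X ω, U ω, Y ω)) (x, u, y₁) →
      0 < pm μ (fun ω => (X ω, U ω, Y ω)) (x, u, y₂) →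
      f (x, y₁) = f (x, y₂) :=
  support_of_W_is_independent_set_general μ hμ X U Y W f hMarkov hdet
end
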